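/- arXiv:math/0604549 — 2 statements merged into one kernel-verified Lean document; each statement's English description precedes it below -/
import Mathlib

section
/- For all b ∈ B and x, x' ∈ X one has ∂(x'·x·δ⁻¹·(b·δ)) = ∂(x')·∂(x); consequently the composite (x'·x·δ⁻¹·(b·δ), b) of the arrows (x, b): b → ∂(x)·b and (x', ∂(x)·b): ∂(x)·b → ∂(x')·∂(x)·b is again an arrow from b to ∂(x')·∂(x)·b. -/
theorem map_act_eq_one_of_map_eq_one {B X : Type*} [Group B] [Group X]
    (d : X →* B) (act : B →* MulAut X)
    (equivariance : ∀ (b : B) (x : X), d (act b x) = b * d x * b⁻¹)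
    (b : B) {y : X} (hy : d y = 1) : d (act b y) = 1 := by
  rw [equivariance, hy, mul_one, mul_inv_cancel]

theorem boundary_of_composite_general
    (B X : Type*) [Group B] [Group X]
    (d : X →* B) (act : B →* MulAut X)
    (equivariance : ∀ (b : B) (x : X), d (act b x) = b * d x * b⁻¹)
    (δ : X) (hδ : d δ = 1) :
    ∀ (b : B) (x x' : X),
      d (x' * x * δ⁻¹ * act b δ) = d x' * d x ∧
      d (x' * x * δ⁻¹ * act b δ) * b = d x' * (d x * b) := by
  intro b x x'
  have boundary : d (x' * x * δ⁻¹ * act b δ) = d x' * d x := by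
    rw [map_mul, map_act_eq_one_of_map_eq_one d act equivariance b hδ, map_mul, map_inv, hδ,
      inv_one, mul_one, mul_one, map_mul]
  exact ⟨boundary, by rw [boundary, mul_assoc]⟩

/-- STATEMENT 11: For all `b ∈ B` and `x, x' ∈ X` one has
`∂(x' * x * δ⁻¹ * (b • δ)) = ∂ x' * ∂ x`; consequently the composite
`(x' * x * δ⁻¹ * (b • δ), b)` of the arrows `(x, b) : b → ∂ x * b` and
`(x', ∂ x * b) : ∂ x * b → ∂ x' * ∂ x * b` is again an arrow from `b` to
`∂ x' * ∂ x * b`. -/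
theorem boundary_of_composite
    (B X : Type*) [Group B] [Group X]
    (d : X →* B) (act : B →* MulAut X)
    (equivariance : ∀ (b : B) (x : X), d (act b x) = b * d x * b⁻¹)
    (peiffer : ∀ x x' : X, act (d x) x' = x * x' * x⁻¹)
    (δ : X) (hδ : d δ = 1) :
    ∀ (b : B) (x x' : X),
      d (x' * x * δ⁻¹ * act b δ) = d x' * d x ∧
      d (x' * x * δ⁻¹ * act b δ) * b = d x' * (d x * b) :=
  boundary_of_composite_general B X d act equivariance δ hδ
end

section
/- The composition of arrows is associative: for all b ∈ B and x, x', x'' ∈ X, composing (x'', ∂(x')·∂(x)·b) with the composite of (x', ∂(x)·b) and (x, b) equals composing the composite of (x'', ∂(x')·∂(x)·b) and (x', ∂(x)·b) with (x, b); explicitly, x''·(x'·x·δ⁻¹·(b·δ))·δ⁻¹·(b·δ) = (x''·x'·δ⁻¹·((∂(x)·b)·δ))·x·δ⁻¹·(b·δ). -/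
/-!
The Peiffer identity makes `act (∂ y)` conjugation by `y`. Since `∂ δ = 1`, conjugation by `δ` is
trivial, so `δ` is central in `X`; and `(∂ x * b) • δ = x * (b • δ) * x⁻¹`. Substituting the
latter on the right-hand side, the two sides differ only by moving `δ⁻¹` past `x`.
-/

section Peiffer

variable {B X : Type*} [Group B] [Group X] {d : X →* B} {act : B →* MulAut X}

theorem commute_of_peiffer_of_map_eq_one (peiffer : ∀ x x' : X, act (d x) x' = x * x' * x⁻¹)
    {δ : X} (hδ : d δ = 1) (y : X) : Commute δ y := by
  have h := peiffer δ y
  rw [hδ, map_one, MulAut.one_apply] at h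
  exact mul_inv_eq_iff_eq_mul.mp h.symm

theorem act_map_mul_apply_of_peiffer (peiffer : ∀ x x' : X, act (d x) x' = x * x' * x⁻¹)
    (x : X) (b : B) (y : X) : act (d x * b) y = x * act b y * x⁻¹ := by
  rw [map_mul, MulAut.mul_apply, peiffer]

end Peiffer

theorem composition_assoc_general
    (B X : Type*) [Group B] [Group X]
    (d : X →* B) (act : B →* MulAut X)
    (peiffer : ∀ x x' : X, act (d x) x' = x * x' * x⁻¹)
    (δ : X) (hδ : d δ = 1) :
    ∀ (b : B) (x x' x'' : X),
      x'' * (x' * x * δ⁻¹ * act b δ) * δ⁻¹ * act b δ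
        = (x'' * x' * δ⁻¹ * act (d x * b) δ) * x * δ⁻¹ * act b δ := by
  intro b x x' x''
  have hx : Commute δ⁻¹ x := (commute_of_peiffer_of_map_eq_one peiffer hδ x).inv_left
  rw [act_map_mul_apply_of_peiffer peiffer]
  simp only [mul_assoc, inv_mul_cancel_left, hx.left_comm]

/-- STATEMENT 12: The composition of arrows is associative: for all `b ∈ B` and
`x, x', x'' ∈ X`, composing `(x'', ∂ x' * ∂ x * b)` with the composite of
`(x', ∂ x * b)` and `(x, b)` equals composing the composite of
`(x'', ∂ x' * ∂ x * b)` and `(x', ∂ x * b)` with `(x, b)`; explicitly,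
`x'' * (x' * x * δ⁻¹ * (b • δ)) * δ⁻¹ * (b • δ)
  = (x'' * x' * δ⁻¹ * ((∂ x * b) • δ)) * x * δ⁻¹ * (b • δ)`. -/
theorem composition_assoc
    (B X : Type*) [Group B] [Group X]
    (d : X →* B) (act : B →* MulAut X)
    (equivariance : ∀ (b : B) (x : X), d (act b x) = b * d x * b⁻¹)
    (peiffer : ∀ x x' : X, act (d x) x' = x * x' * x⁻¹)
    (δ : X) (hδ : d δ = 1) :
    ∀ (b : B) (x x' x'' : X),
      x'' * (x' * x * δ⁻¹ * act b δ) * δ⁻¹ * act b δ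
        = (x'' * x' * δ⁻¹ * act (d x * b) δ) * x * δ⁻¹ * act b δ :=
  composition_assoc_general B X d act peiffer δ hδ
end
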